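/- Let G be a group and c ≥ 1. The verbal subgroup of G ≀ ℤ associated to the variety of nilpotent groups of class at most c (i.e. the (c+1)-st term of the lower central series γ_{c+1}(G ≀ ℤ)) equals the base group G^ℤ. -/

import Mathlib

/-- The translation action of `B` on the base group `B → G` of the regular wreath product. -/
def wrAut (G B : Type*) [Group G] [Group B] : B →* MulAut (B → G) where
  toFun b :=
    { toFun := fun f x => f (x * b)
      invFun := fun f x => f (x * b⁻¹)
      left_inv := fun f => by funext x; simp [mul_assoc]
      right_inv := fun f => by funext x; simp [mul_assoc]
      map_mul' := fun f g => rfl }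
  map_one' := by ext f x; simp
  map_mul' := fun a b => by ext f x; simp [mul_assoc]

/-- The regular wreath product `G ≀ B`. -/
abbrev Wr (G B : Type*) [Group G] [Group B] : Type _ :=
  SemidirectProduct (B → G) B (wrAut G B)

/-- The infinite cyclic group, written multiplicatively. -/
abbrev Zm : Type := Multiplicative ℤ

/-- The generator  of the infinite cyclic group. -/
abbrev zGen : Zm := Multiplicative.ofAdd 1

/-!
The quotient of `G ≀ ℤ` by its base group is `ℤ`, which is abelian, so `γ₂` already lies in the
base. Conversely, every element `f` of the base is the commutator `⁅g, t⁆` of a base element `g`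
with the generator `t` of `ℤ`, where `g` solves the difference equation
`g n * (g (n + 1))⁻¹ = f n`. Hence the base `N` satisfies `N ≤ ⁅N, G ≀ ℤ⁆`, and so it lies in
every term of the lower central series.
-/

namespace Subgroup

variable {K : Type*} [Group K]

theorem le_lowerCentralSeries_of_le_commutator {S H : Subgroup K} (hHS : H ≤ S)
    (hH : H ≤ ⁅H, S⁆) : ∀ n, H ≤ S.lowerCentralSeries n
  | 0 => hHS
  | n + 1 => hH.trans (commutator_mono (le_lowerCentralSeries_of_le_commutator hHS hH n) le_rfl)

end Subgroup

open scoped commutatorElement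

namespace SemidirectProduct

theorem commutator_le_range_inl {N H : Type*} [Group N] [CommGroup H] {φ : H →* MulAut N} :
    commutator (N ⋊[φ] H) ≤ (inl : N →* N ⋊[φ] H).range :=
  range_inl_eq_ker_rightHom (φ := φ) ▸ Abelianization.commutator_subset_ker rightHom

variable {G B : Type*} [Group G] [Group B]

theorem commutatorElement_inl_inr (g : B → G) (b : B) :
    ⁅(inl g : Wr G B), (inr b : Wr G B)⁆ = inl fun x => g x * (g (x * b))⁻¹ := by
  rw [commutatorElement_def, mul_assoc, mul_assoc, ← mul_assoc (inr b), ← map_inv inl,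
    ← map_inv inr, ← inl_aut, ← map_mul]
  rfl

end SemidirectProduct

section Antidiff

variable {G : Type*} [Group G]

/-- A solution `g` of the difference equation `g n * (g (n + 1))⁻¹ = f n`. -/
def antidiff (f : ℤ → G) : ℤ → G
  | .ofNat k => ((List.range k).map fun j => f j).prod⁻¹
  | .negSucc k => ((List.range (k + 1)).map fun j => (f (.negSucc j))⁻¹).prod⁻¹

theorem antidiff_mul_inv_succ (f : ℤ → G) (n : ℤ) :
    antidiff f n * (antidiff f (n + 1))⁻¹ = f n := by
  match n with
  | .ofNat k =>
    show antidiff f k * (antidiff f ↑(k + 1))⁻¹ = f k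
    simp [antidiff, List.range_succ]
  | .negSucc 0 =>
    show antidiff f (.negSucc 0) * (antidiff f 0)⁻¹ = f (.negSucc 0)
    simp [antidiff]
  | .negSucc (k + 1) =>
    show antidiff f (.negSucc (k + 1)) * (antidiff f (.negSucc k))⁻¹ = f (.negSucc (k + 1))
    simp [antidiff, List.range_succ (n := k + 1), mul_assoc]

end Antidiff

open SemidirectProduct in
theorem range_inl_le_commutator_range_inl_top (G : Type*) [Group G] :
    (inl : (Zm → G) →* Wr G Zm).range ≤ ⁅(inl : (Zm → G) →* Wr G Zm).range, ⊤⁆ := by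
  rintro _ ⟨f, rfl⟩
  have hf : inl f =
      ⁅(inl fun x : Zm => antidiff (f ∘ .ofAdd) x.toAdd : Wr G Zm), (inr zGen : Wr G Zm)⁆ := by
    rw [commutatorElement_inl_inr]
    exact congrArg inl (funext fun x => (antidiff_mul_inv_succ _ x.toAdd).symm)
  exact hf ▸ Subgroup.commutator_mem_commutator ⟨_, rfl⟩ (Subgroup.mem_top _)

open SemidirectProduct in
/-- For c ≥ 1, the verbal subgroup of G wr Z associated with the variety of nilpotent groups
of class at most c, i.e. the (c+1)-st term γ_{c+1} of the lower central series (which is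
lowerCentralSeries _ c in Mathlib's 0-indexed convention), equals the base group G^Z. -/
theorem stmt_5 (G : Type*) [Group G] (c : ℕ) (hc : 1 ≤ c) :
    (⊤ : Subgroup (Wr G Zm)).lowerCentralSeries c =
      (inl : (Zm → G) →* Wr G Zm).range :=
  le_antisymm ((Subgroup.lowerCentralSeries_antitone _ hc).trans commutator_le_range_inl)
    (Subgroup.le_lowerCentralSeries_of_le_commutator le_top
      (range_inl_le_commutator_range_inl_top G) c)
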